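/- Let (X,d) be a complete metric space and S = (f_1,...,f_n) a GIFS of order m with attractor A. For each α ∈ Ω, the intersection ⋂_{k∈ℕ} A_{α|_k} is a singleton, where A_{α|_k} = f_{α|_k}(A_k), A_1 = A^m, A_{k+1} = (A_k)^m. -/

import Mathlib

open Filter Topology NNReal ENNReal

/-- The levels of the code space: `Ω_1 = {1,…,n}`, `Ω_{k+1} = (Ω_k)^m`
(here indexed from `0`). -/
def OmegaL (n m : ℕ) : ℕ → Type
  | 0 => Fin n
  | k + 1 => Fin m → OmegaL n m k

/-- The code space `Ω = Π_k Ω_k`. -/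
abbrev CodeSpace (n m : ℕ) : Type := ∀ k : ℕ, OmegaL n m k

instance OmegaL.decEq (n m : ℕ) : ∀ k, DecidableEq (OmegaL n m k)
  | 0 => inferInstanceAs (DecidableEq (Fin n))
  | k + 1 => letI := OmegaL.decEq n m k
             inferInstanceAs (DecidableEq (Fin m → OmegaL n m k))

instance OmegaL.fintype (n m : ℕ) : ∀ k, Fintype (OmegaL n m k)
  | 0 => inferInstanceAs (Fintype (Fin n))
  | k + 1 => letI := OmegaL.fintype n m k
             inferInstanceAs (Fintype (Fin m → OmegaL n m k))

instance OmegaL.topologicalSpace (n m k : ℕ) : TopologicalSpace (OmegaL n m k) := ⊥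

instance OmegaL.discreteTopology (n m k : ℕ) : DiscreteTopology (OmegaL n m k) := ⟨rfl⟩

/-- The metric `d(α,β) = Σ_k d_k(α^k,β^k)/(m+1)^{k+1}` on `Ω`,
where `d_k` is the 0-1 (discrete) metric on `Ω_k`. -/
noncomputable def codeDist {n m : ℕ} (α β : CodeSpace n m) : ℝ :=
  ∑' k : ℕ, (if α k = β k then 0 else 1) / (m + 1) ^ (k + 1)

/-- The shift maps `τ_j : Ω^m → Ω`,
`τ_j(α_1,…,α_m) = (j, (α_1^1,…,α_m^1), (α_1^2,…,α_m^2), …)`. -/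
def tau {n m : ℕ} (j : Fin n) (a : Fin m → CodeSpace n m) : CodeSpace n m :=
  fun k => match k with
  | 0 => j
  | k + 1 => fun i => a i k

/-- The iterated product spaces `X_1 = X^m`, `X_{k+1} = (X_k)^m`
(indexed from `0`). -/
def Xk (X : Type*) (m : ℕ) : ℕ → Type _
  | 0 => Fin m → X
  | k + 1 => Fin m → Xk X m k

/-- For a code `α = (α^1, α^2, …)`, the code `α(i) = (α^2_i, α^3_i, …)`. -/
def shiftCode {n m : ℕ} (α : CodeSpace n m) (i : Fin m) : CodeSpace n m :=
  fun k => (α (k + 1) : Fin m → OmegaL n m k) i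

/-- The maps `f_α : X_{k+1} → X` for `α` (a code restricted to its first `k+1`
symbols): `f_{(α^1)} = f_{α^1}` and
`f_α(x_1,…,x_m) = f_{α^1}(f_{α(1)}(x_1),…,f_{α(m)}(x_m))`. -/
def fA {X : Type*} {n m : ℕ} (f : Fin n → (Fin m → X) → X) :
    ∀ k : ℕ, CodeSpace n m → Xk X m k → X
  | 0, α, x => f (α 0) x
  | k + 1, α, x => f (α 0) (fun i => fA f k (shiftCode α i) ((x : Fin m → Xk X m k) i))

/-- The iterated products `K_1 = K^m`, `K_{k+1} = (K_k)^m` of a set `K ⊆ X`. -/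
def Spow {X : Type*} (m : ℕ) (K : Set X) : ∀ k : ℕ, Set (Xk X m k)
  | 0 => Set.univ.pi fun _ => K
  | k + 1 => (Set.univ.pi fun _ => Spow m K k : Set (Fin m → Xk X m k))

/-- The diagonal points `x^1 = x`, `x^{k+1} = (x^k,…,x^k)`. -/
def diag {X : Type*} {m : ℕ} (x : Fin m → X) : ∀ k : ℕ, Xk X m k
  | 0 => x
  | k + 1 => (fun _ => diag x k : Fin m → Xk X m k)

/-- Extending a code `α` (thought of as its first `k+1` symbols `α^1,…,α^{k+1}`)
by a new symbol `β ∈ Ω_{k+2}`: the concatenation `α ⌢ β`. -/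
def extendCode {n m : ℕ} (α : CodeSpace n m) (k : ℕ) (β : OmegaL n m (k + 1)) :
    CodeSpace n m :=
  fun j => if h : j = k + 1 then cast (congrArg (OmegaL n m) h.symm) β else α j

/-! The pieces `A_{α|k} = f_{α|k}(A_k)` decrease, because every `f_i` maps `A^m` into `A`, and
they are nonempty and compact, so their intersection is nonempty. Two points of the piece of
level `k` are at distance at most `φ^{k+1}(diam A)`, and the iterates of a comparison function
tend to `0` by upper semicontinuity, so the intersection has only one point. -/

noncomputable instance Xk.instMetricSpace (X : Type*) [MetricSpace X] (m : ℕ) :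
    ∀ k, MetricSpace (Xk X m k)
  | 0 => inferInstanceAs (MetricSpace (Fin m → X))
  | k + 1 => letI := Xk.instMetricSpace X m k
             (metricSpacePi : MetricSpace (Fin m → Xk X m k))

section ComparisonFunction

variable {φ : ℝ≥0 → ℝ≥0}

theorem Monotone.apply_le_self_of_lt_of_pos (hmono : Monotone φ)
    (hlt : ∀ t : ℝ≥0, 0 < t → φ t < t) (t : ℝ≥0) : φ t ≤ t := by
  rcases eq_zero_or_pos t with rfl | ht
  · by_contra! h0
    exact (hmono h0.le).not_gt (hlt _ h0)
  · exact (hlt t ht).le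

theorem tendsto_iterate_nhds_zero_of_upperSemicontinuous (hmono : Monotone φ)
    (husc : UpperSemicontinuous φ) (hlt : ∀ t : ℝ≥0, 0 < t → φ t < t) (D : ℝ≥0) :
    Tendsto (fun k => φ^[k] D) atTop (𝓝 0) := by
  have hanti : Antitone (fun k => φ^[k] D) := antitone_nat_of_succ_le fun k => by
    rw [Function.iterate_succ_apply']
    exact hmono.apply_le_self_of_lt_of_pos hlt _
  have hL := tendsto_atTop_ciInf hanti (OrderBot.bddBelow _)
  set L := ⨅ k, φ^[k] D
  rcases eq_zero_or_pos L with hL0 | hL0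
  · rwa [hL0] at hL
  -- If the limit `L` were positive, upper semicontinuity would keep `φ` below `L` near `L`,
  -- so some iterate would drop below `L`.
  obtain ⟨y, hφy, hyL⟩ := exists_between (hlt L hL0)
  obtain ⟨k, hk⟩ := (hL.eventually (husc L y hφy)).exists
  have hLk : L ≤ φ (φ^[k] D) :=
    Function.iterate_succ_apply' φ k D ▸ ciInf_le (OrderBot.bddBelow _) _
  exact absurd (hLk.trans_lt hk) (not_lt.2 hyL.le)

end ComparisonFunction

theorem exists_iInter_eq_singleton_of_tendsto {X : Type*} [MetricSpace X] {B : ℕ → Set X}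
    (hB : ∀ k, IsCompact (B k)) (hne : ∀ k, (B k).Nonempty) (hanti : ∀ k, B (k + 1) ⊆ B k)
    {r : ℕ → ℝ≥0} (hr : Tendsto r atTop (𝓝 0))
    (hdist : ∀ k, ∀ x ∈ B k, ∀ y ∈ B k, nndist x y ≤ r k) :
    ∃ x, ⋂ k, B k = {x} := by
  obtain ⟨x, hx⟩ := (hB 0).nonempty_iInter_of_sequence_nonempty_isCompact_isClosed B hanti hne
    (fun k => (hB k).isClosed)
  refine ⟨x, Set.eq_singleton_iff_unique_mem.2 ⟨hx, fun y hy => ?_⟩⟩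
  have hyx : nndist y x ≤ 0 := ge_of_tendsto' hr fun k =>
    hdist k y (Set.mem_iInter.1 hy k) x (Set.mem_iInter.1 hx k)
  exact eq_of_nndist_eq_zero (nonpos_iff_eq_zero.1 hyx)

theorem Spow_nonempty {X : Type*} {m : ℕ} {K : Set X} (hK : K.Nonempty) :
    ∀ k, (Spow m K k).Nonempty
  | 0 => Set.univ_pi_nonempty_iff.2 fun _ => hK
  | k + 1 => Set.univ_pi_nonempty_iff.2 fun _ => Spow_nonempty hK k

theorem fA_succ_image_Spow_subset {X : Type*} {n m : ℕ} {f : Fin n → (Fin m → X) → X}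
    {A : Set X} (hA : ∀ i, Set.MapsTo (f i) (Set.univ.pi fun _ => A) A) :
    ∀ k (α : CodeSpace n m), fA f (k + 1) α '' Spow m A (k + 1) ⊆ fA f k α '' Spow m A k
  | 0, α => by
    rintro _ ⟨x, hx, rfl⟩
    exact ⟨fun i => f (shiftCode α i 0) (x i), fun i _ => hA _ (hx i (Set.mem_univ i)), rfl⟩
  | k + 1, α => by
    rintro _ ⟨x, hx, rfl⟩
    choose y hy hxy using fun i => fA_succ_image_Spow_subset hA k (shiftCode α i)
      ⟨x i, hx i (Set.mem_univ i), rfl⟩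
    exact ⟨y, fun i _ => hy i, congrArg (f (α 0)) (funext hxy)⟩

section Pieces

variable {X : Type*} [MetricSpace X] {n m : ℕ}

theorem isCompact_Spow {K : Set X} (hK : IsCompact K) : ∀ k, IsCompact (Spow m K k)
  | 0 => isCompact_univ_pi fun _ => hK
  | k + 1 => isCompact_univ_pi fun _ => isCompact_Spow hK k

theorem continuous_fA {f : Fin n → (Fin m → X) → X} (hf : ∀ i, Continuous (f i)) :
    ∀ k (α : CodeSpace n m), Continuous (fA f k α)
  | 0, α => hf (α 0)
  | k + 1, α => (hf (α 0)).comp <| continuous_pi fun i =>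
      (continuous_fA hf k (shiftCode α i)).comp (continuous_apply i)

theorem nndist_fA_le {φ : ℝ≥0 → ℝ≥0} (hmono : Monotone φ) {f : Fin n → (Fin m → X) → X}
    (hf : ∀ i, ∀ x y : Fin m → X, nndist (f i x) (f i y) ≤ φ (nndist x y))
    {A : Set X} {D : ℝ≥0} (hD : ∀ x ∈ A, ∀ y ∈ A, nndist x y ≤ D) :
    ∀ k (α : CodeSpace n m), ∀ x ∈ Spow m A k, ∀ y ∈ Spow m A k,
      nndist (fA f k α x) (fA f k α y) ≤ φ^[k + 1] D
  | 0, α, x, hx, y, hy =>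
    (hf _ x y).trans <| hmono <| nndist_pi_le_iff.2 fun i =>
      hD _ (hx i (Set.mem_univ i)) _ (hy i (Set.mem_univ i))
  | k + 1, α, x, hx, y, hy => by
    rw [Function.iterate_succ_apply']
    exact (hf _ _ _).trans <| hmono <| nndist_pi_le_iff.2 fun i =>
      nndist_fA_le hmono hf hD k (shiftCode α i) _ (hx i (Set.mem_univ i))
        _ (hy i (Set.mem_univ i))

end Pieces

theorem inter_code_pieces_singleton_general
    {X : Type*} [MetricSpace X]
    {n m : ℕ}
    (φ : ℝ≥0 → ℝ≥0)
    (hmono : Monotone φ) (husc : UpperSemicontinuous φ)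
    (hlt : ∀ t : ℝ≥0, 0 < t → φ t < t)
    (f : Fin n → (Fin m → X) → X)
    (hf : ∀ i, ∀ x y : Fin m → X, nndist (f i x) (f i y) ≤ φ (nndist x y))
    (A : Set X) (hAne : A.Nonempty) (hAc : IsCompact A)
    (hAfix : (⋃ i, f i '' Set.univ.pi fun _ => A) = A)
    (α : CodeSpace n m) :
    ∃ x : X, (⋂ k : ℕ, fA f k α '' Spow m A k) = {x} := by
  have hf_cont : ∀ i, Continuous (f i) := fun i =>
    (LipschitzWith.of_edist_le fun x y => by
      simpa only [edist_nndist, ENNReal.coe_le_coe] using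
        (hf i x y).trans (hmono.apply_le_self_of_lt_of_pos hlt _)).continuous
  have hA : ∀ i, Set.MapsTo (f i) (Set.univ.pi fun _ => A) A := fun i x hx =>
    hAfix ▸ Set.mem_iUnion.2 ⟨i, x, hx, rfl⟩
  set D : ℝ≥0 := (Metric.diam A).toNNReal
  have hD : ∀ x ∈ A, ∀ y ∈ A, nndist x y ≤ D := fun x hx y hy =>
    (Real.le_toNNReal_iff_coe_le Metric.diam_nonneg).2
      (Metric.dist_le_diam_of_mem hAc.isBounded hx hy)
  refine exists_iInter_eq_singleton_of_tendsto
    (fun k => (isCompact_Spow hAc k).image (continuous_fA hf_cont k α))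
    (fun k => (Spow_nonempty hAne k).image _) (fun k => fA_succ_image_Spow_subset hA k α)
    ((tendsto_iterate_nhds_zero_of_upperSemicontinuous hmono husc hlt D).comp
      (tendsto_add_atTop_nat 1)) fun k => ?_
  rintro _ ⟨x, hx, rfl⟩ _ ⟨y, hy, rfl⟩
  exact nndist_fA_le hmono hf hD k α x hx y hy

/-- For a GIFS on a complete metric space with attractor `A`, for
every code `α ∈ Ω` the intersection `⋂_k A_{α|_k}` is a singleton, where
`A_{α|_k} = f_{α|_k}(A_k)`. -/
theorem inter_code_pieces_singleton
    {X : Type*} [MetricSpace X] [CompleteSpace X]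
    {n m : ℕ} (hn : 0 < n) (hm : 0 < m)
    (φ : ℝ≥0 → ℝ≥0)
    (hmono : Monotone φ) (husc : UpperSemicontinuous φ)
    (hlt : ∀ t : ℝ≥0, 0 < t → φ t < t)
    (f : Fin n → (Fin m → X) → X)
    (hf : ∀ i, ∀ x y : Fin m → X, nndist (f i x) (f i y) ≤ φ (nndist x y))
    (A : Set X) (hAne : A.Nonempty) (hAc : IsCompact A)
    (hAfix : (⋃ i, f i '' Set.univ.pi fun _ => A) = A)
    (α : CodeSpace n m) :
    ∃ x : X, (⋂ k : ℕ, fA f k α '' Spow m A k) = {x} :=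
  inter_code_pieces_singleton_general φ hmono husc hlt f hf A hAne hAc hAfix α
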